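/- [Monotonicity of the Q-update] Let U ∈ 𝒫 and Q ∈ 𝕆, and set Z̄ := ΦᵀUUᵀΦ. If Q' ∈ 𝕆 satisfies ⟨Z̄Q, Y⟩ ≤ ⟨Z̄Q, Q'⟩ for all Y ∈ 𝕆, then ⟨UᵀΦQ', UᵀΦQ'⟩ ≥ ⟨UᵀΦQ, UᵀΦQ⟩; that is, the objective value cannot decrease through the Q-update: f(U,Q') ≥ f(U,Q). -/

import Mathlib

/-! With `Z̄ = AᵀA` for `A = UᵀΦ`, the hypothesis at `Y = Q` reads `⟨AQ, AQ⟩ ≤ ⟨AQ, AQ'⟩`, and in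
any real inner product space `⟨p, p⟩ ≤ ⟨p, r⟩` forces `⟨p, p⟩ ≤ ⟨r, r⟩`, since
`⟨r, r⟩ - ⟨p, p⟩ = ⟨r - p, r - p⟩ + 2 (⟨p, r⟩ - ⟨p, p⟩)`. -/

open Matrix BigOperators Filter

noncomputable section

/-- Frobenius inner product of two real matrices of the same size. -/
def frob {α β : Type*} [Fintype α] [Fintype β] (A B : Matrix α β ℝ) : ℝ :=
  ∑ u, ∑ v, A u v * B u v

/-- The set 𝒫: blockwise partial permutation matrices. Rows indexed by pairs (i,r),
1 ≤ i ≤ k, 1 ≤ r ≤ m i; columns by Fin d. Entries in {0,1}, exactly one 1 per row,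
each block column sum at most 1. -/
def isP {k : ℕ} (d : ℕ) (m : Fin k → ℕ)
    (U : Matrix (Σ i : Fin k, Fin (m i)) (Fin d) ℝ) : Prop :=
  (∀ u v, U u v = 0 ∨ U u v = 1) ∧
  (∀ u, ∃! v, U u v = 1) ∧
  (∀ (i : Fin k) (c : Fin d), ∑ r : Fin (m i), U ⟨i, r⟩ c ≤ 1)

/-- The set 𝕆: block-orthogonal matrices; each b×b block is orthogonal. -/
def isO (k b : ℕ) (Q : Matrix (Fin k × Fin b) (Fin b) ℝ) : Prop :=
  ∀ i : Fin k,
    (Matrix.of fun s t => Q (i, s) t) * (Matrix.of fun s t => Q (i, s) t)ᵀ =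
      (1 : Matrix (Fin b) (Fin b) ℝ)

/-- Φ is block-diagonal: entries with mismatched block indices vanish. -/
def isBlockDiag {k : ℕ} (m : Fin k → ℕ) (b : ℕ)
    (Φ : Matrix (Σ i : Fin k, Fin (m i)) (Fin k × Fin b) ℝ) : Prop :=
  ∀ (i : Fin k) (r : Fin (m i)) (j : Fin k) (s : Fin b), i ≠ j → Φ ⟨i, r⟩ (j, s) = 0

/-- The objective f(U,Q) = ⟨UᵀΦQ, UᵀΦQ⟩. -/
def obj {k b d : ℕ} (m : Fin k → ℕ)
    (Φ : Matrix (Σ i : Fin k, Fin (m i)) (Fin k × Fin b) ℝ)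
    (U : Matrix (Σ i : Fin k, Fin (m i)) (Fin d) ℝ)
    (Q : Matrix (Fin k × Fin b) (Fin b) ℝ) : ℝ :=
  frob (Uᵀ * Φ * Q) (Uᵀ * Φ * Q)

section Frob

variable {α β γ : Type*} [Fintype α] [Fintype β] [Fintype γ]

lemma frob_self_nonneg (A : Matrix α β ℝ) : 0 ≤ frob A A :=
  Finset.sum_nonneg fun _ _ => Finset.sum_nonneg fun _ _ => mul_self_nonneg _

lemma frob_eq_trace (A B : Matrix α β ℝ) : frob A B = (Aᵀ * B).trace := by
  simp only [frob, trace, diag, mul_apply, transpose_apply]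
  exact Finset.sum_comm

lemma frob_mul_right (A : Matrix α γ ℝ) (Y : Matrix α β ℝ) (X : Matrix γ β ℝ) :
    frob Y (A * X) = frob (Aᵀ * Y) X := by
  rw [frob_eq_trace, frob_eq_trace, transpose_mul, transpose_transpose, Matrix.mul_assoc]

lemma frob_self_sub_frob_self (P R : Matrix α β ℝ) :
    frob R R - frob P P = frob (R - P) (R - P) + 2 * (frob P R - frob P P) := by
  simp only [frob, Matrix.sub_apply, ← Finset.sum_sub_distrib, Finset.mul_sum,
    ← Finset.sum_add_distrib]
  exact Finset.sum_congr rfl fun _ _ => Finset.sum_congr rfl fun _ _ => by ring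

lemma frob_self_le_of_frob_self_le (P R : Matrix α β ℝ) (h : frob P P ≤ frob P R) :
    frob P P ≤ frob R R := by
  have := frob_self_sub_frob_self P R
  linarith [frob_self_nonneg (R - P)]

lemma frob_mul_self_le_of_gram (A : Matrix α γ ℝ) (X Y : Matrix γ β ℝ)
    (h : frob (Aᵀ * A * X) X ≤ frob (Aᵀ * A * X) Y) :
    frob (A * X) (A * X) ≤ frob (A * Y) (A * Y) := by
  refine frob_self_le_of_frob_self_le _ _ ?_
  rwa [frob_mul_right A, frob_mul_right A, ← Matrix.mul_assoc]

end Frob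

theorem monotonicity_Q_update_general (k b d : ℕ)
    (m : Fin k → ℕ)
    (Φ : Matrix (Σ i : Fin k, Fin (m i)) (Fin k × Fin b) ℝ)
    (U : Matrix (Σ i : Fin k, Fin (m i)) (Fin d) ℝ)
    (Q Q' : Matrix (Fin k × Fin b) (Fin b) ℝ)
    (hQ : isO k b Q)
    (hproj : ∀ Y, isO k b Y →
      frob (Φᵀ * U * Uᵀ * Φ * Q) Y ≤ frob (Φᵀ * U * Uᵀ * Φ * Q) Q') :
    obj m Φ U Q' ≥ obj m Φ U Q := by
  have hgram : Φᵀ * U * Uᵀ * Φ = (Uᵀ * Φ)ᵀ * (Uᵀ * Φ) := by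
    simp only [transpose_mul, transpose_transpose, Matrix.mul_assoc]
  have hQQ' := hproj Q hQ
  rw [hgram] at hQQ'
  exact frob_mul_self_le_of_gram _ _ _ hQQ'

theorem monotonicity_Q_update (k b d : ℕ) (hk : 0 < k) (hb : 0 < b) (hd : 0 < d)
    (m : Fin k → ℕ) (hm : ∀ i, 0 < m i)
    (Φ : Matrix (Σ i : Fin k, Fin (m i)) (Fin k × Fin b) ℝ) (hΦ : isBlockDiag m b Φ)
    (U : Matrix (Σ i : Fin k, Fin (m i)) (Fin d) ℝ)
    (Q Q' : Matrix (Fin k × Fin b) (Fin b) ℝ)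
    (hU : isP d m U) (hQ : isO k b Q) (hQ' : isO k b Q')
    (hproj : ∀ Y, isO k b Y →
      frob (Φᵀ * U * Uᵀ * Φ * Q) Y ≤ frob (Φᵀ * U * Uᵀ * Φ * Q) Q') :
    obj m Φ U Q' ≥ obj m Φ U Q :=
  monotonicity_Q_update_general k b d m Φ U Q Q' hQ hproj
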